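/- Let N ≥ 1 be an integer, n > max(N−2, 0) a real number, R > 0, K ≥ 0, γ > 1, M > 0, T > 0. Suppose ρ, V : [0,T] × [0,∞) → ℝ are C¹ functions such that: (i) ρ(t,r) ≥ 0 for all t, r; (ii) ρ(t,r) = 0 and V(t,r) = 0 whenever r ≥ R; (iii) for every t ∈ [0,T], α(N)·∫₀^R ρ(t,s) s^{N−1} ds = M; (iv) for each t the map r ↦ ρ(t,r)^{γ−1} is differentiable on (0,R), and for all t ∈ [0,T] and 0 < r < R: ∂ₜV(t,r) + V(t,r)·∂ᵣV(t,r) + (Kγ/(γ−1))·∂ᵣ(ρ(t,r)^{γ−1}) = −α(N)·r^{1−N}·∫₀^r ρ(t,s) s^{N−1} ds. Then for every t ∈ [0,T], the function H(t) := ∫₀^R r^n V(t,r) dr is differentiable and satisfies H′(t) + R^{n−N+2}·M/(n−N+2) ≥ (n/(2R))·∫₀^R r^n V(t,r)² dr. -/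

import Mathlib

/-!
Multiply the momentum equation by `rⁿ` and integrate over `(0, R)`. The convective term
integrates by parts to `-(n/2) ∫ r^(n-1) V²`, which dominates `-(n/(2R)) ∫ rⁿ V²`; the pressure
term integrates by parts to `-n c ∫ r^(n-1) ρ^(γ-1) ≤ 0` with `c = Kγ/(γ-1)`; and since the
enclosed mass `α(N) ∫₀^r ρ s^(N-1) ds` never exceeds `M`, the gravity term is at most
`M ∫₀^R r^(n+1-N) dr = R^(n-N+2) M / (n-N+2)`. All boundary terms vanish because `0ⁿ = 0` and
`V`, `ρ` vanish at `R`. Since `∂ₜV` is continuous up to the boundary of `[0,T] × [0,∞)`, `H` may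
be differentiated under the integral sign, and both sides of the inequality are continuous in `t`.
-/

/-- The constant `α(N)`: `α(1) = 1`, `α(2) = 2π`, and
`α(N) = N(N−2)·π^{N/2}/Γ(N/2+1)` for `N ≥ 3`. -/
noncomputable def alphaConst (N : ℕ) : ℝ :=
  if N = 1 then 1
  else if N = 2 then 2 * Real.pi
  else (N : ℝ) * ((N : ℝ) - 2) * Real.pi ^ ((N : ℝ) / 2) / Real.Gamma ((N : ℝ) / 2 + 1)

section

open MeasureTheory Set Function

theorem alphaConst_nonneg (N : ℕ) : 0 ≤ alphaConst N := by
  unfold alphaConst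
  split_ifs with h1 h2
  · exact zero_le_one
  · positivity
  · have hN : 0 ≤ (N : ℝ) * ((N : ℝ) - 2) := by
      rcases Nat.eq_zero_or_pos N with rfl | hpos
      · simp
      · have : (3 : ℝ) ≤ N := by exact_mod_cast (show 3 ≤ N by omega)
        nlinarith
    exact div_nonneg (mul_nonneg hN (Real.rpow_nonneg Real.pi_pos.le _))
      (Real.Gamma_pos_of_pos (by positivity)).le

noncomputable def partialLeft (f : ℝ → ℝ → ℝ) (S : Set (ℝ × ℝ)) (x y : ℝ) : ℝ :=
  fderivWithin ℝ (uncurry f) S (x, y) (1, 0)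

noncomputable def partialRight (f : ℝ → ℝ → ℝ) (S : Set (ℝ × ℝ)) (x y : ℝ) : ℝ :=
  fderivWithin ℝ (uncurry f) S (x, y) (0, 1)

section Partial

variable {f : ℝ → ℝ → ℝ} {s u : Set ℝ} {x y : ℝ}

theorem DifferentiableWithinAt.hasDerivWithinAt_partialLeft
    (hf : DifferentiableWithinAt ℝ (uncurry f) (s ×ˢ u) (x, y)) (hy : y ∈ u) :
    HasDerivWithinAt (f · y) (partialLeft f (s ×ˢ u) x y) s x :=
  (hf.hasFDerivWithinAt.comp_hasDerivWithinAt x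
    ((hasDerivWithinAt_id x s).prodMk (hasDerivWithinAt_const x s y))
    fun _ hx' => mk_mem_prod hx' hy :)

theorem DifferentiableWithinAt.hasDerivWithinAt_partialRight
    (hf : DifferentiableWithinAt ℝ (uncurry f) (s ×ˢ u) (x, y)) (hx : x ∈ s) :
    HasDerivWithinAt (f x) (partialRight f (s ×ˢ u) x y) u y :=
  (hf.hasFDerivWithinAt.comp_hasDerivWithinAt y
    ((hasDerivWithinAt_const y u x).prodMk (hasDerivWithinAt_id y u))
    fun _ hy' => mk_mem_prod hx hy' :)

theorem ContDiffOn.continuousOn_partialLeft {S : Set (ℝ × ℝ)}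
    (hf : ContDiffOn ℝ 1 (uncurry f) S) (hS : UniqueDiffOn ℝ S) :
    ContinuousOn (uncurry (partialLeft f S)) S :=
  (hf.continuousOn_fderivWithin hS le_rfl).clm_apply continuousOn_const

theorem ContDiffOn.continuousOn_partialRight {S : Set (ℝ × ℝ)}
    (hf : ContDiffOn ℝ 1 (uncurry f) S) (hS : UniqueDiffOn ℝ S) :
    ContinuousOn (uncurry (partialRight f S)) S :=
  (hf.continuousOn_fderivWithin hS le_rfl).clm_apply continuousOn_const

end Partial

theorem continuousOn_intervalIntegral_of_continuousOn_prod {g : ℝ → ℝ → ℝ} {t₀ t₁ a b : ℝ}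
    (hab : a ≤ b) (hg : ContinuousOn (uncurry g) (Icc t₀ t₁ ×ˢ Icc a b)) :
    ContinuousOn (fun t => ∫ r in a..b, g t r) (Icc t₀ t₁) := by
  rcases lt_or_ge t₁ t₀ with ht | ht
  · simp [Icc_eq_empty_of_lt ht]
  -- clamping both variables to the rectangle extends `g` continuously to the plane
  have hclamp : Continuous fun p : ℝ × ℝ =>
      uncurry g ((projIcc t₀ t₁ ht p.1 : ℝ), (projIcc a b hab p.2 : ℝ)) :=
    hg.comp_continuous (by fun_prop) fun p =>
      ⟨(projIcc t₀ t₁ ht p.1).2, (projIcc a b hab p.2).2⟩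
  refine (intervalIntegral.continuous_parametric_intervalIntegral_of_continuous'
    (f := fun t r => uncurry g ((projIcc t₀ t₁ ht t : ℝ), (projIcc a b hab r : ℝ))) hclamp a b
    ).continuousOn.congr fun t ht' => intervalIntegral.integral_congr fun r hr => ?_
  rw [uIcc_of_le hab] at hr
  simp [projIcc_of_mem ht ht', projIcc_of_mem hab hr]

theorem hasDerivWithinAt_intervalIntegral_of_continuousOn_prod {f g : ℝ → ℝ → ℝ}
    {t₀ t₁ a b t : ℝ} (hab : a ≤ b)
    (hf : ∀ t ∈ Icc t₀ t₁, IntervalIntegrable (f t) volume a b)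
    (hg : ContinuousOn (uncurry g) (Icc t₀ t₁ ×ˢ Icc a b))
    (hfg : ∀ t ∈ Icc t₀ t₁, ∀ r ∈ Icc a b, HasDerivWithinAt (f · r) (g t r) (Icc t₀ t₁) t)
    (ht : t ∈ Icc t₀ t₁) :
    HasDerivWithinAt (fun t => ∫ r in a..b, f t r) (∫ r in a..b, g t r) (Icc t₀ t₁) t := by
  set G := fun s => ∫ r in a..b, g s r
  have hG : ContinuousOn G (Icc t₀ t₁) :=
    continuousOn_intervalIntegral_of_continuousOn_prod hab hg
  have hprim : ∀ t' ∈ Icc t₀ t₁,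
      ∫ r in a..b, f t' r = (∫ r in a..b, f t₀ r) + ∫ s in t₀..t', G s := by
    intro t' ht'
    have hsub : uIcc t₀ t' ⊆ Icc t₀ t₁ := by
      rw [uIcc_of_le ht'.1]
      exact Icc_subset_Icc_right ht'.2
    have hFubini : ∫ s in t₀..t', G s = ∫ r in a..b, ∫ s in t₀..t', g s r :=
      intervalIntegral_intervalIntegral_swap
        ((hg.integrableOn_compact (isCompact_Icc.prod isCompact_Icc)).mono_set
          (prod_mono (uIoc_subset_uIcc.trans hsub)
            (by rw [uIoc_of_le hab]; exact Ioc_subset_Icc_self)))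
    have hFTC : ∀ r ∈ Icc a b, ∫ s in t₀..t', g s r = f t' r - f t₀ r := fun r hr =>
      intervalIntegral.integral_eq_sub_of_hasDerivAt_of_le ht'.1
        (fun s hs => ((hfg s (Icc_subset_Icc_right ht'.2 hs) r hr).continuousWithinAt).mono
          (Icc_subset_Icc_right ht'.2))
        (fun s hs => (hfg s ⟨hs.1.le, hs.2.le.trans ht'.2⟩ r hr).hasDerivAt
          (Icc_mem_nhds hs.1 (hs.2.trans_le ht'.2)))
        ((hg.uncurry_right r hr).mono hsub).intervalIntegrable
    rw [hFubini,
      intervalIntegral.integral_congr fun r hr => hFTC r (by rwa [uIcc_of_le hab] at hr),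
      intervalIntegral.integral_sub (hf t' ht') (hf t₀ ⟨le_rfl, ht.1.trans ht.2⟩)]
    ring
  have : Fact (t ∈ Icc t₀ t₁) := ⟨ht⟩
  have hderiv : HasDerivWithinAt (fun t' => ∫ s in t₀..t', G s) (G t) (Icc t₀ t₁) t :=
    intervalIntegral.integral_hasDerivWithinAt_right
      ((hG.mono (by rw [uIcc_of_le ht.1]; exact Icc_subset_Icc_right ht.2)).intervalIntegrable)
      (hG.stronglyMeasurableAtFilter_nhdsWithin measurableSet_Icc t) (hG t ht)
  exact (hderiv.const_add _).congr (fun t' ht' => hprim t' ht') (hprim t ht)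

theorem intervalIntegrable_rpow_mul {g : ℝ → ℝ} {e R : ℝ} (he : -1 < e) (hR : 0 ≤ R)
    (hg : ContinuousOn g (Icc 0 R)) : IntervalIntegrable (fun r => r ^ e * g r) volume 0 R :=
  (intervalIntegral.intervalIntegrable_rpow' he).mul_continuousOn (by rwa [uIcc_of_le hR])

theorem integral_rpow_mul_deriv {φ φ' : ℝ → ℝ} {n R : ℝ} (hn : 0 < n) (hR : 0 ≤ R)
    (hφ : ContinuousOn φ (Icc 0 R)) (hφ' : ∀ r ∈ Ioo 0 R, HasDerivAt φ (φ' r) r)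
    (hφR : φ R = 0) (hint : IntervalIntegrable (fun r => r ^ n * φ' r) volume 0 R) :
    ∫ r in 0..R, r ^ n * φ' r = -(n * ∫ r in 0..R, r ^ (n - 1) * φ r) := by
  have hint' : IntervalIntegrable (fun r => r ^ (n - 1) * φ r) volume 0 R :=
    intervalIntegrable_rpow_mul (by linarith) hR hφ
  have hFTC := intervalIntegral.integral_eq_sub_of_hasDerivAt_of_le
    (f := fun r => r ^ n * φ r) hR
    ((Real.continuous_rpow_const hn.le).continuousOn.mul hφ)
    (fun r hr => ((Real.hasDerivAt_rpow_const (Or.inl hr.1.ne')).mul (hφ' r hr)).congr_deriv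
      (by ring : n * r ^ (n - 1) * φ r + r ^ n * φ' r = n * (r ^ (n - 1) * φ r) + r ^ n * φ' r))
    ((hint'.const_mul n).add hint)
  rw [intervalIntegral.integral_add (hint'.const_mul n) hint, intervalIntegral.integral_const_mul,
    hφR, Real.zero_rpow hn.ne'] at hFTC
  linarith

theorem integral_rpow_mul_le {f : ℝ → ℝ} {e R M : ℝ} (he : -1 < e) (hR : 0 ≤ R)
    (hf : ContinuousOn f (Icc 0 R)) (hfM : ∀ r ∈ Ioo 0 R, f r ≤ M) :
    ∫ r in 0..R, r ^ e * f r ≤ R ^ (e + 1) * M / (e + 1) :=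
  calc ∫ r in 0..R, r ^ e * f r ≤ ∫ r in 0..R, r ^ e * M :=
        intervalIntegral.integral_mono_on_of_le_Ioo hR (intervalIntegrable_rpow_mul he hR hf)
          (intervalIntegrable_rpow_mul he hR continuousOn_const)
          fun r hr => mul_le_mul_of_nonneg_left (hfM r hr) (Real.rpow_nonneg hr.1.le e)
    _ = R ^ (e + 1) * M / (e + 1) := by
        rw [intervalIntegral.integral_mul_const, integral_rpow (Or.inl he),
          Real.zero_rpow (by linarith)]
        ring

theorem integral_rpow_mul_le_mul_integral_rpow_sub_one_mul {g : ℝ → ℝ} {n R : ℝ} (hn : 0 < n)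
    (hR : 0 ≤ R) (hg : ContinuousOn g (Icc 0 R)) (hg0 : ∀ r ∈ Icc 0 R, 0 ≤ g r) :
    ∫ r in 0..R, r ^ n * g r ≤ R * ∫ r in 0..R, r ^ (n - 1) * g r := by
  rw [← intervalIntegral.integral_const_mul]
  refine intervalIntegral.integral_mono_on_of_le_Ioo hR
    (intervalIntegrable_rpow_mul (by linarith) hR hg)
    ((intervalIntegrable_rpow_mul (by linarith) hR hg).const_mul R) fun r hr => ?_
  have hpow : r ^ n = r * r ^ (n - 1) := by
    rw [Real.rpow_sub_one hr.1.ne', mul_div_cancel₀ _ hr.1.ne']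
  rw [hpow, mul_assoc]
  exact mul_le_mul_of_nonneg_right hr.2.le
    (mul_nonneg (Real.rpow_nonneg hr.1.le _) (hg0 r (Ioo_subset_Icc_self hr)))

theorem moment_lower_bound {v w a P f : ℝ → ℝ} {n N R c M : ℝ}
    (hn : 0 < n) (hnN : N - 2 < n) (hR : 0 < R) (hc : 0 ≤ c)
    (hv : ContinuousOn v (Icc 0 R)) (hw : ContinuousOn w (Icc 0 R))
    (ha : ContinuousOn a (Icc 0 R)) (hvw : ∀ r ∈ Ioo 0 R, HasDerivAt v (w r) r) (hvR : v R = 0)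
    (hP : ContinuousOn P (Icc 0 R)) (hP0 : ∀ r ∈ Icc 0 R, 0 ≤ P r) (hPR : P R = 0)
    (hPd : ∀ r ∈ Ioo 0 R, DifferentiableAt ℝ P r)
    (hf : ContinuousOn f (Icc 0 R)) (hfM : ∀ r ∈ Ioo 0 R, f r ≤ M)
    (heq : ∀ r ∈ Ioo 0 R, a r + v r * w r + c * deriv P r = -(r ^ (1 - N) * f r)) :
    n / (2 * R) * ∫ r in 0..R, r ^ n * v r ^ 2
      ≤ (∫ r in 0..R, r ^ n * a r) + R ^ (n - N + 2) * M / (n - N + 2) := by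
  have hR' := hR.le
  have hforce : EqOn (fun r => r ^ n * (r ^ (1 - N) * f r)) (fun r => r ^ (n + 1 - N) * f r)
      (Ioo 0 R) := fun r hr => by
    dsimp only
    rw [← mul_assoc, ← Real.rpow_add hr.1]
    ring_nf
  have iF : IntervalIntegrable (fun r => r ^ n * (r ^ (1 - N) * f r)) volume 0 R :=
    (intervalIntegrable_rpow_mul (e := n + 1 - N) (by linarith) hR' hf).congr_uIoo
      (by rw [uIoo_of_le hR']; exact hforce.symm)
  have hF : ∫ r in 0..R, r ^ n * (r ^ (1 - N) * f r) ≤ R ^ (n - N + 2) * M / (n - N + 2) := by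
    rw [intervalIntegral.integral_congr_Ioo_of_le hR' hforce]
    have := integral_rpow_mul_le (e := n + 1 - N) (by linarith) hR' hf hfM
    rwa [show n + 1 - N + 1 = n - N + 2 by ring] at this
  have iK : IntervalIntegrable (fun r => r ^ n * (v r * w r)) volume 0 R :=
    intervalIntegrable_rpow_mul (by linarith) hR' (hv.mul hw)
  have hK : ∫ r in 0..R, r ^ n * (v r * w r)
      = -(n * ∫ r in 0..R, r ^ (n - 1) * (v r ^ 2 / 2)) :=
    integral_rpow_mul_deriv hn hR' ((hv.pow 2).div_const 2)
      (fun r hr => (((hvw r hr).pow 2).div_const 2).congr_deriv (by push_cast; ring))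
      (by rw [hvR]; ring) iK
  have iA : IntervalIntegrable (fun r => r ^ n * a r) volume 0 R :=
    intervalIntegrable_rpow_mul (by linarith) hR' ha
  have hQeq : EqOn (fun r => r ^ n * (c * deriv P r))
      (fun r => -(r ^ n * a r + r ^ n * (v r * w r) + r ^ n * (r ^ (1 - N) * f r))) (Ioo 0 R) :=
    fun r hr => by linear_combination r ^ n * heq r hr
  -- the momentum equation is what makes the pressure term integrable up to `r = 0`
  have iQ : IntervalIntegrable (fun r => r ^ n * (c * deriv P r)) volume 0 R :=
    ((iA.add iK).add iF).neg.congr_uIoo (by rw [uIoo_of_le hR']; exact hQeq.symm)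
  have hQ : ∫ r in 0..R, r ^ n * (c * deriv P r)
      = -(n * ∫ r in 0..R, r ^ (n - 1) * (c * P r)) :=
    integral_rpow_mul_deriv hn hR' (continuousOn_const.mul hP)
      (fun r hr => (hPd r hr).hasDerivAt.const_mul c) (by rw [hPR, mul_zero]) iQ
  have hQ0 : 0 ≤ ∫ r in 0..R, r ^ (n - 1) * (c * P r) :=
    intervalIntegral.integral_nonneg hR' fun r hr =>
      mul_nonneg (Real.rpow_nonneg hr.1 _) (mul_nonneg hc (hP0 r hr))
  have hsum : (∫ r in 0..R, r ^ n * a r) + (∫ r in 0..R, r ^ n * (v r * w r))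
      + (∫ r in 0..R, r ^ n * (c * deriv P r))
      + (∫ r in 0..R, r ^ n * (r ^ (1 - N) * f r)) = 0 := by
    rw [← intervalIntegral.integral_add iA iK, ← intervalIntegral.integral_add (iA.add iK) iQ,
      ← intervalIntegral.integral_add ((iA.add iK).add iQ) iF,
      intervalIntegral.integral_congr_Ioo_of_le hR' (g := fun _ => 0)
        fun r hr => by linear_combination r ^ n * heq r hr]
    simp
  have hcmp : n / (2 * R) * ∫ r in 0..R, r ^ n * v r ^ 2
      ≤ n * ∫ r in 0..R, r ^ (n - 1) * (v r ^ 2 / 2) := by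
    have hhalf : ∫ r in 0..R, r ^ (n - 1) * (v r ^ 2 / 2)
        = (∫ r in 0..R, r ^ (n - 1) * v r ^ 2) / 2 := by
      simp_rw [← mul_div_assoc]
      exact intervalIntegral.integral_div _ _
    calc n / (2 * R) * ∫ r in 0..R, r ^ n * v r ^ 2
        ≤ n / (2 * R) * (R * ∫ r in 0..R, r ^ (n - 1) * v r ^ 2) :=
          mul_le_mul_of_nonneg_left (integral_rpow_mul_le_mul_integral_rpow_sub_one_mul hn hR'
            (hv.pow 2) fun r _ => sq_nonneg (v r)) (by positivity)
      _ = n * ∫ r in 0..R, r ^ (n - 1) * (v r ^ 2 / 2) := by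
          rw [hhalf]
          field_simp
  linarith [mul_nonneg hn.le hQ0]

theorem eulerPoisson_moment_lower_bound {ρ V : ℝ → ℝ → ℝ} {N : ℕ} {n R K γ M T t : ℝ}
    (hn : max ((N : ℝ) - 2) 0 < n) (hR : 0 < R) (hK : 0 ≤ K) (hγ : 1 < γ)
    (hV : ContDiffOn ℝ 1 (uncurry V) (Icc 0 T ×ˢ Ici 0)) (ht : t ∈ Ioo 0 T)
    (hρ : ContinuousOn (ρ t) (Icc 0 R)) (hρnn : ∀ r, 0 ≤ ρ t r) (hρR : ρ t R = 0)
    (hVR : V t R = 0) (hmass : alphaConst N * (∫ s in (0:ℝ)..R, ρ t s * s ^ (N - 1)) = M)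
    (hdiffp : ∀ r ∈ Ioo 0 R, DifferentiableAt ℝ (fun s => ρ t s ^ (γ - 1)) r)
    (hmom : ∀ r ∈ Ioo 0 R,
      deriv (fun τ => V τ r) t + V t r * deriv (fun s => V t s) r
        + (K * γ / (γ - 1)) * deriv (fun s => ρ t s ^ (γ - 1)) r
      = -(alphaConst N * r ^ ((1:ℝ) - N) * ∫ s in (0:ℝ)..r, ρ t s * s ^ (N - 1))) :
    n / (2 * R) * ∫ r in (0:ℝ)..R, r ^ n * V t r ^ 2
      ≤ (∫ r in (0:ℝ)..R, r ^ n * partialLeft V (Icc 0 T ×ˢ Ici 0) t r)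
        + R ^ (n - N + 2) * M / (n - N + 2) := by
  have ht' := Ioo_subset_Icc_self ht
  have hS : UniqueDiffOn ℝ (Icc 0 T ×ˢ Ici (0 : ℝ)) :=
    (uniqueDiffOn_Icc (ht.1.trans ht.2)).prod (uniqueDiffOn_Ici 0)
  have hVd : ∀ r, 0 ≤ r → DifferentiableWithinAt ℝ (uncurry V) (Icc 0 T ×ˢ Ici 0) (t, r) :=
    fun r hr => hV.differentiableOn one_ne_zero _ ⟨ht', hr⟩
  have hVt : ∀ r ∈ Ioo 0 R, HasDerivAt (V · r) (partialLeft V (Icc 0 T ×ˢ Ici 0) t r) t :=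
    fun r hr => ((hVd r hr.1.le).hasDerivWithinAt_partialLeft hr.1.le).hasDerivAt
      (Icc_mem_nhds ht.1 ht.2)
  have hVr : ∀ r ∈ Ioo 0 R, HasDerivAt (V t) (partialRight V (Icc 0 T ×ˢ Ici 0) t r) r :=
    fun r hr => ((hVd r hr.1.le).hasDerivWithinAt_partialRight ht').hasDerivAt
      (Ici_mem_nhds hr.1)
  have hmi : IntervalIntegrable (fun s => ρ t s * s ^ (N - 1)) volume 0 R :=
    (hρ.mul (continuous_pow (N - 1)).continuousOn).intervalIntegrable_of_Icc hR.le
  have hmassc : ContinuousOn (fun r => alphaConst N * ∫ s in (0:ℝ)..r, ρ t s * s ^ (N - 1))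
      (Icc 0 R) := by
    have := intervalIntegral.continuousOn_primitive_interval' hmi left_mem_uIcc
    rw [uIcc_of_le hR.le] at this
    exact continuousOn_const.mul this
  have hmassM : ∀ r ∈ Ioo 0 R, alphaConst N * ∫ s in (0:ℝ)..r, ρ t s * s ^ (N - 1) ≤ M := by
    intro r hr
    rw [← hmass]
    exact mul_le_mul_of_nonneg_left (intervalIntegral.integral_mono_interval le_rfl hr.1.le
      hr.2.le (ae_restrict_of_forall_mem measurableSet_Ioc fun s hs =>
        mul_nonneg (hρnn s) (pow_nonneg hs.1.le _)) hmi) (alphaConst_nonneg N)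
  refine moment_lower_bound (c := K * γ / (γ - 1)) ((le_max_right _ _).trans_lt hn)
    ((le_max_left _ _).trans_lt hn) hR (div_nonneg (mul_nonneg hK (by linarith)) (by linarith))
    ((hV.continuousOn.uncurry_left t ht').mono Icc_subset_Ici_self)
    (((hV.continuousOn_partialRight hS).uncurry_left t ht').mono Icc_subset_Ici_self)
    (((hV.continuousOn_partialLeft hS).uncurry_left t ht').mono Icc_subset_Ici_self) hVr hVR
    (hρ.rpow_const fun _ _ => Or.inr (by linarith)) (fun r _ => Real.rpow_nonneg (hρnn r) _)
    (by rw [hρR, Real.zero_rpow (by linarith)]) hdiffp hmassc hmassM fun r hr => ?_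
  have h := hmom r hr
  rw [(hVt r hr).deriv, (hVr r hr).deriv] at h
  linear_combination h

end

theorem intermediate_inequality_attractive_general
    (N : ℕ) (n R K γ M T : ℝ)
    (hn : max ((N : ℝ) - 2) 0 < n) (hR : 0 < R) (hK : 0 ≤ K) (hγ : 1 < γ)
    (hT : 0 < T)
    (ρ V : ℝ → ℝ → ℝ)
    (hρC1 : ContDiffOn ℝ 1 (Function.uncurry ρ) (Set.Icc 0 T ×ˢ Set.Ici 0))
    (hVC1 : ContDiffOn ℝ 1 (Function.uncurry V) (Set.Icc 0 T ×ˢ Set.Ici 0))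
    (hρnn : ∀ t r, 0 ≤ ρ t r)
    (hsupp : ∀ t r, R ≤ r → ρ t r = 0 ∧ V t r = 0)
    (hmass : ∀ t ∈ Set.Icc (0:ℝ) T,
      alphaConst N * (∫ s in (0:ℝ)..R, ρ t s * s ^ (N - 1)) = M)
    (hdiffp : ∀ t ∈ Set.Icc (0:ℝ) T, ∀ r ∈ Set.Ioo (0:ℝ) R,
      DifferentiableAt ℝ (fun s => ρ t s ^ (γ - 1)) r)
    (hmom : ∀ t ∈ Set.Icc (0:ℝ) T, ∀ r ∈ Set.Ioo (0:ℝ) R,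
      deriv (fun τ => V τ r) t + V t r * deriv (fun s => V t s) r
        + (K * γ / (γ - 1)) * deriv (fun s => ρ t s ^ (γ - 1)) r
      = -(alphaConst N * r ^ ((1:ℝ) - N) * ∫ s in (0:ℝ)..r, ρ t s * s ^ (N - 1))) :
    DifferentiableOn ℝ (fun t => ∫ r in (0:ℝ)..R, r ^ n * V t r) (Set.Icc 0 T) ∧
    ∀ t ∈ Set.Icc (0:ℝ) T,
      n / (2 * R) * ∫ r in (0:ℝ)..R, r ^ n * V t r ^ 2
      ≤ derivWithin (fun t => ∫ r in (0:ℝ)..R, r ^ n * V t r) (Set.Icc 0 T) t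
          + R ^ (n - N + 2) * M / (n - N + 2) := by
  set S := Set.Icc 0 T ×ˢ Set.Ici (0 : ℝ)
  have hn0 : 0 < n := (le_max_right _ _).trans_lt hn
  have hpow : Continuous fun p : ℝ × ℝ => p.2 ^ n :=
    (Real.continuous_rpow_const hn0.le).comp continuous_snd
  have hrect : Set.Icc 0 T ×ˢ Set.Icc 0 R ⊆ S := Set.prod_mono subset_rfl Set.Icc_subset_Ici_self
  have hVtR : ContinuousOn (Function.uncurry fun t r => r ^ n * partialLeft V S t r)
      (Set.Icc 0 T ×ˢ Set.Icc 0 R) :=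
    hpow.continuousOn.mul ((hVC1.continuousOn_partialLeft
      ((uniqueDiffOn_Icc hT).prod (uniqueDiffOn_Ici 0))).mono hrect)
  have hV2R : ContinuousOn (Function.uncurry fun t r => r ^ n * V t r ^ 2)
      (Set.Icc 0 T ×ˢ Set.Icc 0 R) :=
    hpow.continuousOn.mul ((hVC1.continuousOn.mono hrect).pow 2)
  have hH : ∀ t ∈ Set.Icc 0 T, HasDerivWithinAt (fun t => ∫ r in (0:ℝ)..R, r ^ n * V t r)
      (∫ r in (0:ℝ)..R, r ^ n * partialLeft V S t r) (Set.Icc 0 T) t :=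
    fun t ht => hasDerivWithinAt_intervalIntegral_of_continuousOn_prod hR.le
      (fun t ht => intervalIntegrable_rpow_mul (by linarith) hR.le
        ((hVC1.continuousOn.uncurry_left t ht).mono Set.Icc_subset_Ici_self)) hVtR
      (fun t ht r hr => ((hVC1.differentiableOn one_ne_zero (t, r) ⟨ht, hr.1⟩
        ).hasDerivWithinAt_partialLeft hr.1).const_mul _) ht
  refine ⟨fun t ht => (hH t ht).differentiableWithinAt, fun t ht => ?_⟩
  rw [(hH t ht).derivWithin (uniqueDiffOn_Icc hT t ht)]
  -- At `t = 0, T` the two-sided `deriv` in `hmom` is not the time derivative of `V`, so the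
  -- inequality is proved at interior times and extended by continuity.
  have hinterior : ∀ t ∈ Set.Ioo 0 T, n / (2 * R) * ∫ r in (0:ℝ)..R, r ^ n * V t r ^ 2
      ≤ (∫ r in (0:ℝ)..R, r ^ n * partialLeft V S t r) + R ^ (n - N + 2) * M / (n - N + 2) :=
    fun t ht => have ht' := Set.Ioo_subset_Icc_self ht
      eulerPoisson_moment_lower_bound hn hR hK hγ hVC1 ht
        ((hρC1.continuousOn.uncurry_left t ht').mono Set.Icc_subset_Ici_self) (hρnn t)
        (hsupp t R le_rfl).1 (hsupp t R le_rfl).2 (hmass t ht') (hdiffp t ht') (hmom t ht')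
  exact ContinuousWithinAt.closure_le (by rwa [closure_Ioo hT.ne])
    (((continuousOn_const.mul (continuousOn_intervalIntegral_of_continuousOn_prod hR.le hV2R))
      t ht).mono Set.Ioo_subset_Icc_self)
    (((continuousOn_intervalIntegral_of_continuousOn_prod hR.le hVtR).add continuousOn_const
      t ht).mono Set.Ioo_subset_Icc_self) hinterior

/-- Intermediate differential inequality of the integration method for the attractive
Euler–Poisson system: the functional `H(t) = ∫₀^R rⁿ V(t,r) dr` is differentiable and
satisfies `H′(t) + R^{n−N+2}M/(n−N+2) ≥ (n/(2R))·∫₀^R rⁿ V(t,r)² dr`. -/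
theorem intermediate_inequality_attractive
    (N : ℕ) (hN : 1 ≤ N) (n R K γ M T : ℝ)
    (hn : max ((N : ℝ) - 2) 0 < n) (hR : 0 < R) (hK : 0 ≤ K) (hγ : 1 < γ)
    (hM : 0 < M) (hT : 0 < T)
    (ρ V : ℝ → ℝ → ℝ)
    (hρC1 : ContDiffOn ℝ 1 (Function.uncurry ρ) (Set.Icc 0 T ×ˢ Set.Ici 0))
    (hVC1 : ContDiffOn ℝ 1 (Function.uncurry V) (Set.Icc 0 T ×ˢ Set.Ici 0))
    (hρnn : ∀ t r, 0 ≤ ρ t r)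
    (hsupp : ∀ t r, R ≤ r → ρ t r = 0 ∧ V t r = 0)
    (hmass : ∀ t ∈ Set.Icc (0:ℝ) T,
      alphaConst N * (∫ s in (0:ℝ)..R, ρ t s * s ^ (N - 1)) = M)
    (hdiffp : ∀ t ∈ Set.Icc (0:ℝ) T, ∀ r ∈ Set.Ioo (0:ℝ) R,
      DifferentiableAt ℝ (fun s => ρ t s ^ (γ - 1)) r)
    (hmom : ∀ t ∈ Set.Icc (0:ℝ) T, ∀ r ∈ Set.Ioo (0:ℝ) R,
      deriv (fun τ => V τ r) t + V t r * deriv (fun s => V t s) r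
        + (K * γ / (γ - 1)) * deriv (fun s => ρ t s ^ (γ - 1)) r
      = -(alphaConst N * r ^ ((1:ℝ) - N) * ∫ s in (0:ℝ)..r, ρ t s * s ^ (N - 1))) :
    DifferentiableOn ℝ (fun t => ∫ r in (0:ℝ)..R, r ^ n * V t r) (Set.Icc 0 T) ∧
    ∀ t ∈ Set.Icc (0:ℝ) T,
      n / (2 * R) * ∫ r in (0:ℝ)..R, r ^ n * V t r ^ 2
      ≤ derivWithin (fun t => ∫ r in (0:ℝ)..R, r ^ n * V t r) (Set.Icc 0 T) t
          + R ^ (n - N + 2) * M / (n - N + 2) :=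
  intermediate_inequality_attractive_general N n R K γ M T hn hR hK hγ hT ρ V hρC1 hVC1 hρnn hsupp
    hmass hdiffp hmom
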